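/- Let E be a real Banach lattice and let T : E → E be a positive bounded linear operator which is mean ergodic with mean ergodic projection 0 (the Cesàro means (1/n) · Σ_{k=0}^{n-1} T^k x converge in norm to 0 for every x ∈ E). Then the operator −T is also mean ergodic with mean ergodic projection 0, i.e. (1/n) · Σ_{k=0}^{n-1} (−T)^k x converges in norm to 0 for every x ∈ E. -/

import Mathlib

/-!
A positive operator satisfies `|T x| ≤ T |x|`, so by induction `|(-T)ᵏ x| ≤ Tᵏ |x|`. Summing, the
Cesàro means of `-T` at `x` are dominated in modulus by those of `T` at `|x|`, and a solid norm
turns this domination into a norm bound, which tends to `0` by mean ergodicity of `T`.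
-/

open Filter Finset Topology

section PositiveOperator

variable {R E : Type*} [Ring R] [AddCommGroup E] [Lattice E] [IsOrderedAddMonoid E] [Module R E]
  {T : Module.End R E}

theorem Module.End.abs_apply_le_apply_abs (hT : ∀ x, 0 ≤ x → 0 ≤ T x) (x : E) :
    |T x| ≤ T |x| := by
  have hmono : Monotone T := (monotone_iff_map_nonneg T).2 hT
  refine abs_le'.2 ⟨hmono (le_abs_self x), ?_⟩
  simpa using hmono (neg_le_abs x)

theorem Module.End.abs_neg_pow_apply_le (hT : ∀ x, 0 ≤ x → 0 ≤ T x) (k : ℕ) (x : E) :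
    |((-T) ^ k) x| ≤ (T ^ k) |x| := by
  induction k with
  | zero => simp
  | succ k ih =>
    rw [pow_succ', pow_succ', Module.End.mul_apply, Module.End.mul_apply, LinearMap.neg_apply,
      abs_neg]
    exact (abs_apply_le_apply_abs hT _).trans ((monotone_iff_map_nonneg T).2 hT ih)

end PositiveOperator

theorem abs_sum_le_sum_of_abs_le {ι G : Type*} [AddCommGroup G] [Lattice G]
    [IsOrderedAddMonoid G] {u v : ι → G} (huv : ∀ i, |u i| ≤ v i) (s : Finset ι) :
    |∑ i ∈ s, u i| ≤ ∑ i ∈ s, v i :=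
  (le_sum_of_subadditive _ abs_zero.le abs_add_le s u).trans (sum_le_sum fun i _ ↦ huv i)

theorem norm_le_norm_of_abs_le {E : Type*} [NormedAddCommGroup E] [Lattice E] [HasSolidNorm E]
    [IsOrderedAddMonoid E] {a b : E} (h : |a| ≤ b) : ‖a‖ ≤ ‖b‖ :=
  norm_le_norm_of_abs_le_abs <| by rwa [abs_of_nonneg ((abs_nonneg a).trans h)]

theorem tendsto_cesaro_zero_of_abs_le {E : Type*} [NormedAddCommGroup E] [Lattice E]
    [HasSolidNorm E] [IsOrderedAddMonoid E] [NormedSpace ℝ E] {u v : ℕ → E}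
    (huv : ∀ k, |u k| ≤ v k)
    (hv : Tendsto (fun n : ℕ ↦ (n : ℝ)⁻¹ • ∑ k ∈ range n, v k) atTop (𝓝 0)) :
    Tendsto (fun n : ℕ ↦ (n : ℝ)⁻¹ • ∑ k ∈ range n, u k) atTop (𝓝 0) := by
  refine squeeze_zero_norm (fun n ↦ ?_) (tendsto_zero_iff_norm_tendsto_zero.1 hv)
  rw [norm_smul, norm_smul]
  gcongr
  exact norm_le_norm_of_abs_le (abs_sum_le_sum_of_abs_le huv _)

theorem neg_mean_ergodic_of_mean_ergodic_projection_zero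
    (E : Type*) [NormedAddCommGroup E] [Lattice E] [HasSolidNorm E]
    [IsOrderedAddMonoid E] [NormedSpace ℝ E]
    (T : E →L[ℝ] E)
    (hpos : ∀ x : E, 0 ≤ x → 0 ≤ T x)
    (hme : ∀ x : E,
      Tendsto (fun n : ℕ => (n : ℝ)⁻¹ • ∑ k ∈ Finset.range n, (T ^ k) x) atTop (nhds 0)) :
    ∀ x : E,
      Tendsto (fun n : ℕ => (n : ℝ)⁻¹ • ∑ k ∈ Finset.range n, ((-T) ^ k) x) atTop
        (nhds 0) := by
  intro x
  have hdom (k : ℕ) : |((-T) ^ k) x| ≤ (T ^ k) |x| := by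
    rw [← ContinuousLinearMap.coe_coe, ← ContinuousLinearMap.coe_coe (T ^ k),
      ContinuousLinearMap.toLinearMap_pow, ContinuousLinearMap.toLinearMap_pow,
      ContinuousLinearMap.toLinearMap_neg]
    exact Module.End.abs_neg_pow_apply_le hpos k x
  exact tendsto_cesaro_zero_of_abs_le hdom (hme |x|)
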